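/- There exists a constant C > 0 (depending only on K) such that for all λ > 0, x > 0 and z > −1, the Taylor remainder B(λ, x, z) = Ĉ(λ, x(1+z)) − Ĉ(λ, x) − z x ∂Ĉ/∂x(λ, x) satisfies |B(λ, x, z)| ≤ C x^{1/2} λ^{−1/2} e^{−λ/8} ϖ(z), where ϖ(z) = z·1_{{z>0}} + (1+z)^{−1/2}·1_{{−1<z≤0}} + 1. -/

import Mathlib

open MeasureTheory

/-- Standard normal density φ(a) = (2π)^{−1/2} e^{−a²/2}. -/
noncomputable def stdNormalPdf (a : ℝ) : ℝ :=
  (Real.sqrt (2 * Real.pi))⁻¹ * Real.exp (-(a ^ 2) / 2)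

/-- Standard normal distribution function Φ(a) = ∫_{−∞}^a φ(s) ds. -/
noncomputable def stdNormalCdf (a : ℝ) : ℝ :=
  ∫ s in Set.Iio a, stdNormalPdf s

/-- d(λ, x) = ln(x/K)/√λ + √λ/2. -/
noncomputable def bsD (K lam x : ℝ) : ℝ :=
  Real.log (x / K) / Real.sqrt lam + Real.sqrt lam / 2

/-- Black–Scholes call price with strike K, zero interest rate and total
remaining variance λ: Ĉ(λ, x) = x Φ(d(λ, x)) − K Φ(d(λ, x) − √λ). -/
noncomputable def bsPrice (K lam x : ℝ) : ℝ :=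
  x * stdNormalCdf (bsD K lam x) - K * stdNormalCdf (bsD K lam x - Real.sqrt lam)

/-- ϖ(z) = z·1_{z>0} + (1+z)^{−1/2}·1_{−1<z≤0} + 1. -/
noncomputable def varpi (z : ℝ) : ℝ :=
  (if 0 < z then z else 0)
    + (if -1 < z ∧ z ≤ 0 then (1 + z) ^ (-(1 / 2) : ℝ) else 0) + 1

/-!
The delta `∂Ĉ/∂x` equals `Φ(d)` because `x φ(d) = K φ(d − √λ)`, so the remainder is at most
`x|z|` times the oscillation of `Φ(d)` between `x` and `x(1+z)`. Completing the square,
`φ(d(λ, s)) ≤ (2π)^{−1/2} √(K/s) e^{−λ/8}`, so the gamma `φ(d)/(s√λ)` is at most `M s^{−3/2}` with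
`M ∝ λ^{−1/2} e^{−λ/8}`, and the delta oscillates by at most `2M a^{−1/2}` on `[a, ∞)`. Taking
`a = x min(1, 1+z)` leaves the factor `|z| / √(min(1, 1+z)) ≤ ϖ(z)`.
-/

open Real Set

lemma continuous_stdNormalPdf : Continuous stdNormalPdf := by
  unfold stdNormalPdf; fun_prop

lemma integrable_stdNormalPdf : Integrable stdNormalPdf := by
  refine ((integrable_exp_neg_mul_sq (b := 1 / 2) (by norm_num)).const_mul
    (√(2 * π))⁻¹).congr (Filter.Eventually.of_forall fun s => ?_)
  simp only [stdNormalPdf]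
  ring_nf

lemma hasDerivAt_stdNormalCdf (a : ℝ) : HasDerivAt stdNormalCdf (stdNormalPdf a) a := by
  have hsplit : ∀ b, stdNormalCdf b = stdNormalCdf 0 + ∫ s in (0 : ℝ)..b, stdNormalPdf s := by
    intro b
    simp only [stdNormalCdf, ← integral_Iic_eq_integral_Iio]
    rw [← intervalIntegral.integral_Iic_sub_Iic integrable_stdNormalPdf.integrableOn
      integrable_stdNormalPdf.integrableOn]
    ring
  rw [show stdNormalCdf = _ from funext hsplit]
  exact (intervalIntegral.integral_hasDerivAt_right integrable_stdNormalPdf.intervalIntegrable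
    (continuous_stdNormalPdf.stronglyMeasurableAtFilter _ _)
    continuous_stdNormalPdf.continuousAt).const_add _

lemma abs_sub_sub_mul_deriv_le {f f' : ℝ → ℝ} {s : Set ℝ} {x y L : ℝ} (hs : Convex ℝ s)
    (hf : ∀ u ∈ s, HasDerivAt f (f' u) u) (bound : ∀ u ∈ s, |f' u - f' x| ≤ L) (hx : x ∈ s)
    (hy : y ∈ s) : |f y - f x - (y - x) * f' x| ≤ L * |y - x| := by
  have h := hs.norm_image_sub_le_of_norm_hasDerivWithin_le (f := fun u => f u - u * f' x)
    (fun u hu => ((hf u hu).sub ((hasDerivAt_id' u).mul_const (f' x))).hasDerivWithinAt)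
    (by simpa using bound) hx hy
  simp only [norm_eq_abs] at h
  convert h using 2
  ring

lemma monotoneOn_Ioi_of_hasDerivAt_nonneg {f f' : ℝ → ℝ}
    (hf : ∀ u, 0 < u → HasDerivAt f (f' u) u) (hf' : ∀ u, 0 < u → 0 ≤ f' u) :
    MonotoneOn f (Ioi 0) := by
  refine monotoneOn_of_hasDerivWithinAt_nonneg (f' := f') (convex_Ioi 0)
    (fun u hu => (hf u hu).continuousAt.continuousWithinAt) (fun u hu => ?_) (fun u hu => ?_)
  · rw [interior_Ioi] at hu ⊢
    exact (hf u hu).hasDerivWithinAt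
  · exact hf' u (interior_subset hu)

lemma abs_sub_le_of_abs_deriv_le_div_mul_sqrt {f f' : ℝ → ℝ} {M a s t : ℝ}
    (hf : ∀ u, 0 < u → HasDerivAt f (f' u) u) (hf' : ∀ u, 0 < u → |f' u| ≤ M / (u * √u))
    (ha : 0 < a) (hs : a ≤ s) (ht : a ≤ t) : |f s - f t| ≤ 2 * M / √a := by
  wlog hst : s ≤ t generalizing s t
  · rw [abs_sub_comm]
    exact this ht hs (le_of_not_ge hst)
  have hM : 0 ≤ M := by simpa using (abs_nonneg _).trans (hf' 1 one_pos)
  -- `±f − 2M/√u` are monotone on `(0, ∞)`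
  have hpot : ∀ u, 0 < u → HasDerivAt (fun u => 2 * M / √u) (-(M / (u * √u))) u := by
    intro u hu
    have hsu : √u ≠ 0 := (sqrt_pos.2 hu).ne'
    refine (((hasDerivAt_sqrt hu.ne').inv hsu).const_mul (2 * M)).congr_deriv ?_
    field_simp
    rw [sq_sqrt hu.le]
  have hupper := monotoneOn_Ioi_of_hasDerivAt_nonneg (f := fun u => f u - 2 * M / √u)
    (fun u hu => (hf u hu).sub (hpot u hu)) (fun u hu => by linarith [(abs_le.1 (hf' u hu)).1])
    (ha.trans_le hs) (ha.trans_le ht) hst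
  have hlower := monotoneOn_Ioi_of_hasDerivAt_nonneg (f := fun u => -f u - 2 * M / √u)
    (fun u hu => (hf u hu).neg.sub (hpot u hu))
    (fun u hu => by linarith [(abs_le.1 (hf' u hu)).2]) (ha.trans_le hs) (ha.trans_le ht) hst
  have hts : 0 ≤ 2 * M / √t := by positivity
  have hsa : 2 * M / √s ≤ 2 * M / √a := by gcongr
  rw [abs_sub_le_iff]
  constructor <;> linarith

section BlackScholes

variable {K lam x : ℝ}

lemma hasDerivAt_bsD (hK : K ≠ 0) (hx : x ≠ 0) :
    HasDerivAt (bsD K lam) (x⁻¹ / √lam) x := by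
  refine ((((hasDerivAt_id' x).div_const K).log (div_ne_zero hx hK)).div_const √lam).add_const
    (√lam / 2) |>.congr_deriv ?_
  rw [div_div_div_cancel_right₀ hK, one_div]

lemma hasDerivAt_stdNormalCdf_bsD (hK : K ≠ 0) (hx : x ≠ 0) :
    HasDerivAt (fun s => stdNormalCdf (bsD K lam s))
      (stdNormalPdf (bsD K lam x) * (x⁻¹ / √lam)) x :=
  (hasDerivAt_stdNormalCdf _).comp x (hasDerivAt_bsD hK hx)

lemma bsD_mul_sqrt (hlam : 0 < lam) : bsD K lam x * √lam = log (x / K) + lam / 2 := by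
  have := sq_sqrt hlam.le
  simp only [bsD]
  field_simp
  linarith

lemma mul_stdNormalPdf_bsD (hK : 0 < K) (hlam : 0 < lam) (hx : 0 < x) :
    x * stdNormalPdf (bsD K lam x) = K * stdNormalPdf (bsD K lam x - √lam) := by
  have hexp : -(bsD K lam x - √lam) ^ 2 / 2 = -bsD K lam x ^ 2 / 2 + log (x / K) := by
    nlinarith [bsD_mul_sqrt (K := K) (x := x) hlam, sq_sqrt hlam.le]
  simp only [stdNormalPdf]
  rw [hexp, exp_add, exp_log (div_pos hx hK)]
  field_simp

lemma hasDerivAt_bsPrice (hK : 0 < K) (hlam : 0 < lam) (hx : 0 < x) :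
    HasDerivAt (bsPrice K lam) (stdNormalCdf (bsD K lam x)) x := by
  refine (((hasDerivAt_id' x).mul (hasDerivAt_stdNormalCdf_bsD hK.ne' hx.ne')).sub
    (((hasDerivAt_stdNormalCdf _).comp x
      ((hasDerivAt_bsD hK.ne' hx.ne').sub_const √lam)).const_mul K)).congr_deriv ?_
  linear_combination (x⁻¹ / √lam) * mul_stdNormalPdf_bsD hK hlam hx

lemma stdNormalPdf_bsD_le (hK : 0 < K) (hlam : 0 < lam) (hx : 0 < x) :
    stdNormalPdf (bsD K lam x) ≤ (√(2 * π))⁻¹ * √(K / x) * exp (-lam / 8) := by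
  have hsq := sq_sqrt hlam.le
  have hd := bsD_mul_sqrt (K := K) (x := x) hlam
  have hlog : log (K / x) = -log (x / K) := by rw [← log_inv, inv_div]
  -- complete the square: `d = t + √λ/2` with `t = ln(x/K)/√λ`
  have hexp : -bsD K lam x ^ 2 / 2 ≤ log (K / x) / 2 + -lam / 8 := by
    nlinarith [sq_nonneg (bsD K lam x - √lam / 2)]
  rw [stdNormalPdf, mul_assoc]
  gcongr
  calc exp (-bsD K lam x ^ 2 / 2) ≤ exp (log (K / x) / 2 + -lam / 8) := exp_le_exp.2 hexp
    _ = √(K / x) * exp (-lam / 8) := by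
      rw [exp_add, exp_half, exp_log (div_pos hK hx)]

lemma abs_stdNormalPdf_bsD_mul_le (hK : 0 < K) (hlam : 0 < lam) (hx : 0 < x) :
    |stdNormalPdf (bsD K lam x) * (x⁻¹ / √lam)|
      ≤ (√(2 * π))⁻¹ * √K / √lam * exp (-lam / 8) / (x * √x) := by
  have hpdf : 0 ≤ stdNormalPdf (bsD K lam x) := by unfold stdNormalPdf; positivity
  rw [abs_of_nonneg (by positivity)]
  calc stdNormalPdf (bsD K lam x) * (x⁻¹ / √lam)
      ≤ (√(2 * π))⁻¹ * √(K / x) * exp (-lam / 8) * (x⁻¹ / √lam) := by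
        gcongr
        exact stdNormalPdf_bsD_le hK hlam hx
    _ = (√(2 * π))⁻¹ * √K / √lam * exp (-lam / 8) / (x * √x) := by
        rw [sqrt_div' _ hx.le]
        field_simp

end BlackScholes

lemma abs_div_sqrt_min_le_varpi {z : ℝ} (hz : -1 < z) : |z| / √(min 1 (1 + z)) ≤ varpi z := by
  rcases lt_or_ge 0 z with hpos | hnonpos
  · rw [min_eq_left (by linarith), sqrt_one, div_one, abs_of_pos hpos, varpi, if_pos hpos,
      if_neg (by rintro ⟨-, h⟩; linarith)]
    linarith
  · rw [min_eq_right (by linarith), varpi, if_neg (not_lt.2 hnonpos), if_pos ⟨hz, hnonpos⟩,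
      rpow_neg (by linarith), ← sqrt_eq_rpow]
    have : |z| / √(1 + z) ≤ (√(1 + z))⁻¹ := by
      rw [div_eq_mul_inv]
      exact mul_le_of_le_one_left (by positivity) (abs_le.2 ⟨by linarith, by linarith⟩)
    linarith

theorem bs_jump_remainder_bound (K : ℝ) (hK : 0 < K) :
    ∃ C : ℝ, 0 < C ∧ ∀ lam x z : ℝ, 0 < lam → 0 < x → -1 < z →
      |bsPrice K lam (x * (1 + z)) - bsPrice K lam x
          - z * x * deriv (bsPrice K lam) x|
        ≤ C * x ^ ((1 : ℝ) / 2) * lam ^ (-(1 / 2) : ℝ) * Real.exp (-lam / 8)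
            * varpi z := by
  refine ⟨2 * ((√(2 * π))⁻¹ * √K), by positivity, fun lam x z hlam hx hz => ?_⟩
  set M := (√(2 * π))⁻¹ * √K / √lam * exp (-lam / 8) with hM
  set m := min 1 (1 + z)
  have hm : 0 < m := lt_min one_pos (by linarith)
  have ha : 0 < x * m := mul_pos hx hm
  have hxa : x ∈ Ici (x * m) := mul_le_of_le_one_right hx.le (min_le_left _ _)
  have hya : x * (1 + z) ∈ Ici (x * m) := mul_le_mul_of_nonneg_left (min_le_right _ _) hx.le
  have hΔ : ∀ u ∈ Ici (x * m),
      |stdNormalCdf (bsD K lam u) - stdNormalCdf (bsD K lam x)| ≤ 2 * M / √(x * m) :=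
    fun u hu => abs_sub_le_of_abs_deriv_le_div_mul_sqrt (f := fun s => stdNormalCdf (bsD K lam s))
      (fun v hv => hasDerivAt_stdNormalCdf_bsD hK.ne' hv.ne')
      (fun v hv => abs_stdNormalPdf_bsD_mul_le hK hlam hv) ha hu hxa
  have hR := abs_sub_sub_mul_deriv_le (convex_Ici _)
    (fun u hu => hasDerivAt_bsPrice hK hlam (ha.trans_le hu)) hΔ hxa hya
  rw [(hasDerivAt_bsPrice hK hlam hx).deriv, rpow_neg hlam.le, ← sqrt_eq_rpow, ← sqrt_eq_rpow]
  calc _ = |bsPrice K lam (x * (1 + z)) - bsPrice K lam x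
        - (x * (1 + z) - x) * stdNormalCdf (bsD K lam x)| := by ring_nf
    _ ≤ 2 * M / √(x * m) * |x * (1 + z) - x| := hR
    _ = 2 * ((√(2 * π))⁻¹ * √K) * √x * (√lam)⁻¹ * exp (-lam / 8) * (|z| / √m) := by
        rw [show x * (1 + z) - x = x * z by ring, abs_mul, abs_of_pos hx, sqrt_mul hx.le, hM]
        field_simp
        rw [sq_sqrt hx.le]
    _ ≤ _ := mul_le_mul_of_nonneg_left (abs_div_sqrt_min_le_varpi hz) (by positivity)
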